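/- Let M be a MAG over V = {X, Y} ∪ O satisfying the pretreatment setup, in which X and Y are joined by the bidirected edge X ↔ Y. If there exists a vertex S ∈ O that is adjacent to X but not adjacent to Y, then there exists a set Z ⊆ MB(Y) \ {X} with S ∉ Z such that S and Y are m-separated by Z while S and X are m-connected given Z. (Unshielded-collider case in Scenario 2 of the proof of Theorem 4: necessity of rule R2(ii).) -/

import Mathlib

namespace CausalGraph

/-- A directed mixed graph: directed edges `dir a b` (a → b) and bidirected
edges `bidir a b` (a ↔ b), with at most one edge between any two vertices
and no self-loops. -/
structure MixedGraph (V : Type*) where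
  dir : V → V → Prop
  bidir : V → V → Prop
  bidir_symm : ∀ a b, bidir a b → bidir b a
  dir_irrefl : ∀ a, ¬ dir a a
  bidir_irrefl : ∀ a, ¬ bidir a a
  dir_not_dir : ∀ a b, dir a b → ¬ dir b a
  dir_not_bidir : ∀ a b, dir a b → ¬ bidir a b

variable {V : Type*}

/-- Two vertices are adjacent if there is an edge (of any kind) between them. -/
def MixedGraph.adj (G : MixedGraph V) (a b : V) : Prop :=
  G.dir a b ∨ G.dir b a ∨ G.bidir a b

/-- There is an edge between `a` and `b` with an arrowhead at `b`. -/
def ArrowInto (G : MixedGraph V) (a b : V) : Prop :=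
  G.dir a b ∨ G.bidir a b

/-- `p` is a path between `a` and `b`: a list of distinct vertices, each
consecutive pair adjacent, starting at `a` and ending at `b`. -/
def IsPathBetween (G : MixedGraph V) (p : List V) (a b : V) : Prop :=
  List.Chain' G.adj p ∧ p.Nodup ∧ p.head? = some a ∧ p.getLast? = some b ∧ 2 ≤ p.length

/-- `p` is a directed path from `a` to `b`: all edges are directed edges
pointing toward `b`. -/
def IsDirectedPath (G : MixedGraph V) (p : List V) (a b : V) : Prop :=
  List.Chain' G.dir p ∧ p.Nodup ∧ p.head? = some a ∧ p.getLast? = some b ∧ 2 ≤ p.length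

/-- `a` is an ancestor of `b` (and `b` a descendant of `a`): `a = b` or there
is a directed path from `a` to `b`. -/
def Ancestor (G : MixedGraph V) (a b : V) : Prop :=
  a = b ∨ ∃ p, IsDirectedPath G p a b

/-- `w` is an intermediate (non-endpoint) vertex of the path `p`. -/
def IsIntermediateOn (p : List V) (w : V) : Prop :=
  ∃ (u v : V) (l₁ l₂ : List V), p = l₁ ++ u :: w :: v :: l₂

/-- `w` is a collider on the path `p`: both edges of the path at `w` have an
arrowhead at `w`. -/
def IsColliderOn (G : MixedGraph V) (p : List V) (w : V) : Prop :=
  ∃ (u v : V) (l₁ l₂ : List V), p = l₁ ++ u :: w :: v :: l₂ ∧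
    ArrowInto G u w ∧ ArrowInto G v w

/-- `w` is a non-collider intermediate vertex on the path `p`. -/
def IsNonColliderOn (G : MixedGraph V) (p : List V) (w : V) : Prop :=
  IsIntermediateOn p w ∧ ¬ IsColliderOn G p w

/-- The path `p` between `a` and `b` (with `a, b ∉ Z`) is m-connecting given
`Z`: every non-collider on it is not in `Z`, and every collider on it has a
descendant in `Z`. -/
def MConnPath (G : MixedGraph V) (Z : Set V) (p : List V) (a b : V) : Prop :=
  IsPathBetween G p a b ∧ a ∉ Z ∧ b ∉ Z ∧
    (∀ w, IsNonColliderOn G p w → w ∉ Z) ∧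
    (∀ w, IsColliderOn G p w → ∃ d ∈ Z, Ancestor G w d)

/-- `a` and `b` are m-separated by `Z`: no path between them is m-connecting
given `Z`. -/
def MSep (G : MixedGraph V) (Z : Set V) (a b : V) : Prop :=
  ∀ p, ¬ MConnPath G Z p a b

/-- `a` and `b` are m-connected given `Z`. -/
def MConn (G : MixedGraph V) (Z : Set V) (a b : V) : Prop :=
  ∃ p, MConnPath G Z p a b

/-- Set version of m-separation: every vertex of `A` is m-separated from every
vertex of `B` by `Z`. -/
def MSepSets (G : MixedGraph V) (Z A B : Set V) : Prop :=
  ∀ a ∈ A, ∀ b ∈ B, MSep G Z a b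

/-- `G` is a maximal ancestral graph (MAG): it is ancestral (no directed or
almost directed cycles), and every pair of distinct non-adjacent vertices is
m-separated by some set of vertices. -/
def IsMAG (G : MixedGraph V) : Prop :=
  (∀ a b, G.dir a b → ¬ Ancestor G b a) ∧
  (∀ a b, G.bidir a b → ¬ Ancestor G a b) ∧
  (∀ a b, a ≠ b → ¬ G.adj a b → ∃ Z : Set V, a ∉ Z ∧ b ∉ Z ∧ MSep G Z a b)

/-- `p` is a collider path between `a` and `b`: every intermediate vertex is a
collider on it. -/
def IsColliderPathBetween (G : MixedGraph V) (p : List V) (a b : V) : Prop :=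
  IsPathBetween G p a b ∧ ∀ w, IsIntermediateOn p w → IsColliderOn G p w

/-- The Markov blanket of `y`: all vertices adjacent to `y`, together with all
vertices non-adjacent to `y` joined to `y` by a collider path. -/
def MarkovBlanket (G : MixedGraph V) (y : V) : Set V :=
  {v | v ≠ y ∧ (G.adj v y ∨ (¬ G.adj v y ∧ ∃ p, IsColliderPathBetween G p v y))}

/-- The directed edge `x → y` is visible: there is a vertex `s` not adjacent
to `y` such that either there is an edge between `s` and `x` with an arrowhead
at `x`, or there is a collider path from `s` to `x` with an arrowhead at `x`
all of whose intermediate vertices are parents of `y`. -/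
def VisibleEdge (G : MixedGraph V) (x y : V) : Prop :=
  G.dir x y ∧ ∃ s, s ≠ y ∧ ¬ G.adj s y ∧
    (ArrowInto G s x ∨
      ∃ p, IsColliderPathBetween G p s x ∧
        (∃ (l : List V) (u : V), p = l ++ [u, x] ∧ ArrowInto G u x) ∧
        (∀ w, IsIntermediateOn p w → G.dir w y))

/-- A non-causal path from `x` to `y`: a path between `x` and `y` that is not
a directed path from `x` to `y`. -/
def NonCausalPath (G : MixedGraph V) (p : List V) (a b : V) : Prop :=
  IsPathBetween G p a b ∧ ¬ IsDirectedPath G p a b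

/-- `Z` blocks every non-causal path from `x` to `y`. -/
def BlocksAllNonCausal (G : MixedGraph V) (x y : V) (Z : Set V) : Prop :=
  ∀ p, NonCausalPath G p x y → ¬ MConnPath G Z p x y

/-- `Z` satisfies the generalized adjustment criterion relative to `(x, y)`:
every directed path from `x` to `y` starts with a visible directed edge out of
`x`, `Z` contains no descendant of any vertex lying on a directed path from
`x` to `y`, and `Z` blocks every non-causal path from `x` to `y`. -/
def ValidAdjustment (G : MixedGraph V) (x y : V) (Z : Set V) : Prop :=
  (∀ (p : List V) (w : V) (l : List V),
      IsDirectedPath G p x y → p = x :: w :: l → VisibleEdge G x w) ∧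
  (∀ v ∈ Z, ¬ ∃ (w : V) (p : List V), IsDirectedPath G p x y ∧ w ∈ p ∧ Ancestor G w v) ∧
  BlocksAllNonCausal G x y Z

/-- Pretreatment setup: `G` is a MAG over `V = {x, y} ∪ O`, `x ≠ y`, `y` is
not an ancestor of `x`, and neither `x` nor `y` is an ancestor of any vertex
of `O`. -/
structure Pretreatment (G : MixedGraph V) (x y : V) (O : Set V) : Prop where
  mag : IsMAG G
  ne : x ≠ y
  x_not_mem : x ∉ O
  y_not_mem : y ∉ O
  cover : (Set.univ : Set V) = {x, y} ∪ O
  y_not_anc_x : ¬ Ancestor G y x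
  x_not_anc_O : ∀ v ∈ O, ¬ Ancestor G x v
  y_not_anc_O : ∀ v ∈ O, ¬ Ancestor G y v


section Aux

variable {V : Type*} {G : MixedGraph V}

lemma adj_symm {a b : V} (h : G.adj a b) : G.adj b a := by
  rcases h with h | h | h
  · exact Or.inr (Or.inl h)
  · exact Or.inl h
  · exact Or.inr (Or.inr (G.bidir_symm _ _ h))

lemma ArrowInto.adj {a b : V} (h : ArrowInto G a b) : G.adj a b := by
  rcases h with h | h
  · exact Or.inl h
  · exact Or.inr (Or.inr h)

lemma not_arrowInto_of_dir {b c : V} (h : G.dir b c) : ¬ ArrowInto G c b := by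
  rintro (h' | h')
  · exact G.dir_not_dir _ _ h h'
  · exact G.dir_not_bidir _ _ h (G.bidir_symm _ _ h')

lemma bidir_of_arrow_arrow {a b : V} (h1 : ArrowInto G a b) (h2 : ArrowInto G b a) :
    G.bidir a b := by
  rcases h1 with h1 | h1
  · exact absurd h1 (fun hh => not_arrowInto_of_dir hh h2)
  · exact h1

lemma arrowInto_of_bidir {a b : V} (h : G.bidir a b) : ArrowInto G a b := Or.inr h

lemma adj_irrefl (a : V) : ¬ G.adj a a := by
  rintro (h | h | h)
  · exact G.dir_irrefl _ h
  · exact G.dir_irrefl _ h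
  · exact G.bidir_irrefl _ h

lemma adj_ne {a b : V} (h : G.adj a b) : a ≠ b := by
  rintro rfl; exact adj_irrefl a h

/-! ### Ancestor basics -/

lemma ancestor_refl (a : V) : Ancestor G a a := Or.inl rfl

lemma ancestor_of_dir {a b : V} (h : G.dir a b) : Ancestor G a b := by
  have hab : a ≠ b := by rintro rfl; exact G.dir_irrefl _ h
  exact Or.inr ⟨[a, b], by simp [IsDirectedPath, h, hab]; exact List.isChain_pair.2 h⟩

lemma getLast?_cons_ne {α : Type*} {a : α} {l : List α} (h : l ≠ []) :
    (a :: l).getLast? = l.getLast? := by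
  cases l with
  | nil => exact absurd rfl h
  | cons b t => exact List.getLast?_cons_cons

/-- deduplicate a chain, preserving endpoints -/
lemma chain'_dedup {R : V → V → Prop} :
    ∀ (n : ℕ) (l : List V), l.length ≤ n → l.Chain' R →
      ∃ l' : List V, l'.Chain' R ∧ l'.Nodup ∧ l'.head? = l.head? ∧
        l'.getLast? = l.getLast? ∧ l' ⊆ l := by
  intro n
  induction n with
  | zero =>
    intro l hl _
    have : l = [] := List.length_eq_zero_iff.1 (Nat.le_zero.1 hl)
    subst this
    exact ⟨[], List.isChain_nil, by simp, rfl, rfl, by simp⟩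
  | succ n ih =>
    intro l hl hch
    by_cases hnd : l.Nodup
    · exact ⟨l, hch, hnd, rfl, rfl, fun _ h => h⟩
    · match l, hl with
      | [], _ => exact ⟨[], List.isChain_nil, by simp, rfl, rfl, by simp⟩
      | a :: t, hl =>
        by_cases ha : a ∈ t
        · obtain ⟨s, u, rfl⟩ := List.append_of_mem ha
          have hsuff : (a :: u) <:+ (a :: (s ++ a :: u)) := ⟨a :: s, by simp⟩
          have hch' : (a :: u).Chain' R := hch.suffix hsuff
          have hlen' : (a :: u).length ≤ n := by
            simp only [List.length_cons, List.length_append] at hl ⊢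
            omega
          obtain ⟨l', h1, h2, h3, h4, h5⟩ := ih (a :: u) hlen' hch'
          refine ⟨l', h1, h2, by simpa using h3, ?_, fun z hz => hsuff.subset (h5 hz)⟩
          rw [h4]
          have hne : (s ++ a :: u) ≠ [] := by simp
          obtain ⟨w, hw⟩ : ∃ w, (a :: u).getLast? = some w :=
            ⟨(a :: u).getLast (by simp), List.getLast?_eq_getLast (by simp)⟩
          rw [getLast?_cons_ne hne, List.getLast?_append, hw]
          rfl
        · have hndt : ¬ t.Nodup := fun hnd' => hnd (List.nodup_cons.2 ⟨ha, hnd'⟩)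
          match t, ha, hndt with
          | [], ha, hndt => exact absurd List.nodup_nil hndt
          | b :: t', ha, hndt =>
            have hlen' : (b :: t').length ≤ n := by simp at hl ⊢; omega
            obtain ⟨l', h1, h2, h3, h4, h5⟩ := ih (b :: t') hlen' hch.tail
            obtain ⟨b2, l'', rfl⟩ : ∃ b2 l'', l' = b2 :: l'' := by
              cases l' with
              | nil => simp at h3
              | cons u v => exact ⟨u, v, rfl⟩
            simp only [List.head?_cons, Option.some.injEq] at h3
            subst h3
            have hanotin : a ∉ b2 :: l'' := fun hmem => ha (h5 hmem)
            refine ⟨a :: b2 :: l'', List.isChain_cons_cons.2 ⟨(List.isChain_cons_cons.1 hch).1, h1⟩,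
              List.nodup_cons.2 ⟨hanotin, h2⟩, rfl, ?_, ?_⟩
            · exact h4.trans (getLast?_cons_ne (by simp)).symm
            · intro z hz
              rcases List.mem_cons.1 hz with rfl | hz'
              · exact List.mem_cons_self
              · exact List.mem_cons_of_mem _ (h5 hz')

lemma ancestor_trans {a b c : V} (h1 : Ancestor G a b) (h2 : Ancestor G b c) :
    Ancestor G a c := by
  rcases h1 with rfl | ⟨p, hp⟩
  · exact h2
  rcases h2 with rfl | ⟨q, hq⟩
  · exact Or.inr ⟨p, hp⟩
  obtain ⟨hpch, hpnd, hph, hpl, hplen⟩ := hp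
  obtain ⟨hqch, hqnd, hqh, hql, hqlen⟩ := hq
  obtain ⟨qt, rfl⟩ : ∃ qt, q = b :: qt := by
    cases q with
    | nil => simp at hqh
    | cons hd tl => exact ⟨tl, by simp at hqh; rw [hqh]⟩
  have hqt : qt ≠ [] := by
    intro h0; rw [h0] at hqlen; simp at hqlen
  have hwalk : (p ++ qt).Chain' G.dir := by
    show List.IsChain _ _
    rw [List.isChain_append]
    refine ⟨hpch, hqch.tail, ?_⟩
    intro u hu v hv
    rw [hpl] at hu
    simp only [Option.mem_def, Option.some.injEq] at hu
    subst hu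
    cases qt with
    | nil => simp at hv
    | cons w tl =>
      simp only [List.head?_cons, Option.mem_def, Option.some.injEq] at hv
      subst hv
      exact (List.isChain_cons_cons.1 hqch).1
  obtain ⟨l', h1, h2, h3, h4, -⟩ := chain'_dedup (p ++ qt).length _ le_rfl hwalk
  have hh : l'.head? = some a := by
    rw [h3, List.head?_append]
    cases p with
    | nil => simp at hph
    | cons hd tl => simp at hph ⊢; exact hph
  have hll : l'.getLast? = some c := by
    rw [h4, List.getLast?_append]
    rw [getLast?_cons_ne hqt] at hql
    simp [hql]
  by_cases hac : a = c
  · exact Or.inl hac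
  · refine Or.inr ⟨l', h1, h2, hh, hll, ?_⟩
    cases l' with
    | nil => simp at hh
    | cons x tl =>
      cases tl with
      | nil =>
        simp at hh hll
        rw [hh] at hll
        exact absurd hll hac
      | cons z tl' => simp


/-! ### Index characterizations -/

lemma decomp_of_index {p : List V} {i : ℕ} (h : i + 2 < p.length) :
    p = p.take i ++ p[i] :: p[i+1] :: p[i+2] :: p.drop (i+3) := by
  have e1 : p.drop i = p[i] :: p.drop (i+1) := (List.getElem_cons_drop (as := p) (i := i) (by omega)).symm
  have e2 : p.drop (i+1) = p[i+1] :: p.drop (i+2) := (List.getElem_cons_drop (as := p) (i := (i+1)) (by omega)).symm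
  have e3 : p.drop (i+2) = p[i+2] :: p.drop (i+3) := (List.getElem_cons_drop (as := p) (i := (i+2)) (by omega)).symm
  conv_lhs => rw [← List.take_append_drop i p, e1, e2, e3]

lemma isIntermediateOn_iff {p : List V} {w : V} :
    IsIntermediateOn p w ↔ ∃ i, ∃ h : i + 2 < p.length, p[i+1] = w := by
  constructor
  · rintro ⟨u, v, l₁, l₂, rfl⟩
    refine ⟨l₁.length, by simp only [List.length_append, List.length_cons]; omega, ?_⟩
    rw [List.getElem_append_right (by omega)]
    simp
  · rintro ⟨i, h, rfl⟩
    exact ⟨p[i], p[i+2], p.take i, p.drop (i+3), decomp_of_index h⟩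

lemma isColliderOn_iff {p : List V} {w : V} :
    IsColliderOn G p w ↔ ∃ i, ∃ h : i + 2 < p.length,
      p[i+1] = w ∧ ArrowInto G p[i] w ∧ ArrowInto G p[i+2] w := by
  constructor
  · rintro ⟨u, v, l₁, l₂, rfl, h1, h2⟩
    refine ⟨l₁.length, by simp only [List.length_append, List.length_cons]; omega, ?_, ?_, ?_⟩
    · rw [List.getElem_append_right (by omega)]; simp
    · rw [List.getElem_append_right (by omega)]; simpa
    · rw [List.getElem_append_right (by omega)]; simpa
  · rintro ⟨i, h, rfl, h1, h2⟩
    exact ⟨p[i], p[i+2], p.take i, p.drop (i+3), decomp_of_index h, h1, h2⟩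

lemma chain'_getElem {R : V → V → Prop} {p : List V} (h : p.Chain' R) (i : ℕ)
    (hi : i + 1 < p.length) : R p[i] p[i+1] := by
  have := List.isChain_iff_getElem.1 h i (by omega)
  simpa [List.get_eq_getElem] using this

/-! ### Triple conditions -/

/-- Index-wise record of the m-connection conditions along a list. -/
def TriplesOK (G : MixedGraph V) (Z : Set V) (p : List V) : Prop :=
  ∀ i, ∀ h : i + 2 < p.length,
    ((ArrowInto G p[i] p[i+1] ∧ ArrowInto G p[i+2] p[i+1]) → ∃ d ∈ Z, Ancestor G p[i+1] d) ∧
    (¬(ArrowInto G p[i] p[i+1] ∧ ArrowInto G p[i+2] p[i+1]) → p[i+1] ∉ Z)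

lemma mconnPath_of_triples {Z : Set V} {p : List V} {a b : V}
    (hch : p.Chain' G.adj) (hnd : p.Nodup) (hh : p.head? = some a)
    (hl : p.getLast? = some b) (hlen : 2 ≤ p.length) (ht : TriplesOK G Z p)
    (ha : a ∉ Z) (hb : b ∉ Z) : MConnPath G Z p a b := by
  refine ⟨⟨hch, hnd, hh, hl, hlen⟩, ha, hb, ?_, ?_⟩
  · rintro w ⟨hint, hncol⟩
    obtain ⟨i, h, rfl⟩ := isIntermediateOn_iff.1 hint
    refine (ht i h).2 ?_
    intro hpair
    exact hncol (isColliderOn_iff.2 ⟨i, h, rfl, hpair.1, hpair.2⟩)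
  · intro w hcol
    obtain ⟨i, h, rfl, h1, h2⟩ := isColliderOn_iff.1 hcol
    exact (ht i h).1 ⟨h1, h2⟩

lemma triples_of_mconnPath {Z : Set V} {p : List V} {a b : V}
    (hm : MConnPath G Z p a b) : TriplesOK G Z p := by
  obtain ⟨⟨hch, hnd, hh, hl, hlen⟩, ha, hb, hnc, hc⟩ := hm
  intro i h
  constructor
  · intro hpair
    exact hc _ (isColliderOn_iff.2 ⟨i, h, rfl, hpair.1, hpair.2⟩)
  · intro hpair
    refine hnc _ ⟨isIntermediateOn_iff.2 ⟨i, h, rfl⟩, ?_⟩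
    intro hcol
    obtain ⟨j, hj, hje, h1, h2⟩ := isColliderOn_iff.1 hcol
    have hij : j + 1 = i + 1 := hnd.getElem_inj_iff.1 hje
    have hij' : j = i := by omega
    subst hij'
    exact hpair ⟨h1, h2⟩

/-! ### Reversal -/

lemma chain'_adj_reverse {p : List V} (h : p.Chain' G.adj) : p.reverse.Chain' G.adj :=
  List.isChain_reverse.2 (h.imp fun _ _ hab => adj_symm hab)

lemma triplesOK_reverse {Z : Set V} {p : List V} (ht : TriplesOK G Z p) :
    TriplesOK G Z p.reverse := by
  intro i h
  have hlen : i + 2 < p.length := by simpa using h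
  have hj : (p.length - 3 - i) + 2 < p.length := by omega
  have e0 : p.reverse[i]'(by simp; omega) = p[(p.length - 3 - i) + 2]'(by omega) := by
    rw [List.getElem_reverse]
    have : p.length - 1 - i = (p.length - 3 - i) + 2 := by omega
    simp only [this]
  have e1 : p.reverse[i+1]'(by simp; omega) = p[(p.length - 3 - i) + 1]'(by omega) := by
    rw [List.getElem_reverse]
    have : p.length - 1 - (i+1) = (p.length - 3 - i) + 1 := by omega
    simp only [this]
  have e2 : p.reverse[i+2]'(by simp; omega) = p[(p.length - 3 - i)]'(by omega) := by
    rw [List.getElem_reverse]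
    have : p.length - 1 - (i+2) = p.length - 3 - i := by omega
    simp only [this]
  obtain ⟨c1, c2⟩ := ht (p.length - 3 - i) hj
  rw [e0, e1, e2]
  exact ⟨fun hp => c1 ⟨hp.2, hp.1⟩, fun hp => c2 (fun hp' => hp ⟨hp'.2, hp'.1⟩)⟩

/-! ### Directed path lemmas -/

lemma dirpath_mem_anc {p : List V} {a b : V} (hp : IsDirectedPath G p a b) {v : V}
    (hv : v ∈ p) : Ancestor G a v ∧ Ancestor G v b := by
  obtain ⟨hch, hnd, hh, hl, hlen⟩ := hp
  obtain ⟨l₁, l₂, rfl⟩ := List.append_of_mem hv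
  constructor
  · cases l₁ with
    | nil =>
      simp at hh
      rw [hh]
      exact ancestor_refl a
    | cons c t =>
      have hpre : ((c :: t) ++ [v]) <+: (c :: t ++ v :: l₂) := ⟨l₂, by simp⟩
      refine Or.inr ⟨(c :: t) ++ [v], hch.prefix hpre, hpre.sublist.nodup hnd, ?_, ?_, by simp⟩
      · simp at hh ⊢; exact hh
      · have : (c :: t) ++ [v] = c :: (t ++ [v]) := by simp
        rw [List.getLast?_append]
        simp
  · cases hl2 : l₂ with
    | nil =>
      subst hl2
      have : (l₁ ++ [v]).getLast? = some v := by
        rw [List.getLast?_append]; simp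
      rw [this] at hl
      simp at hl
      rw [hl]
      exact ancestor_refl b
    | cons c t =>
      subst hl2
      refine Or.inr ⟨v :: c :: t, hch.suffix ⟨l₁, rfl⟩, ?_, by simp, ?_, by simp⟩
      · exact ((List.suffix_append l₁ _).sublist).nodup hnd
      · rw [← hl, List.getLast?_append]
        obtain ⟨w, hw⟩ : ∃ w, (v :: c :: t).getLast? = some w :=
          ⟨(v :: c :: t).getLast (by simp), List.getLast?_eq_getLast (by simp)⟩
        rw [hw]
        rfl


lemma getLast?_append_ne {l₁ l₂ : List V} (h : l₂ ≠ []) :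
    (l₁ ++ l₂).getLast? = l₂.getLast? := by
  rw [List.getLast?_append]
  obtain ⟨w, hw⟩ : ∃ w, l₂.getLast? = some w := ⟨l₂.getLast h, List.getLast?_eq_getLast h⟩
  rw [hw]
  rfl

lemma triplesOK_of_dir_chain {Z : Set V} {l : List V} (h : l.Chain' G.dir)
    (hz : ∀ v ∈ l, v ∉ Z) : TriplesOK G Z l := by
  intro i hi
  have h2 : G.dir l[i+1] l[i+2] := chain'_getElem h (i+1) (by omega)
  exact ⟨fun hpair => absurd hpair.2 (not_arrowInto_of_dir h2),
    fun _ => hz _ (List.getElem_mem _)⟩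

lemma triplesOK_tail {Z : Set V} {a : V} {l : List V} (h : TriplesOK G Z (a :: l)) :
    TriplesOK G Z l := by
  intro i hi
  have := h (i+1) (by simp only [List.length_cons]; omega)
  simpa only [List.getElem_cons_succ] using this

/-- Splice a directed escape path `q` (from the end of `C` to `b`) onto the path `C`,
producing a Z-OK path from the head of `C` to `b`. -/
lemma splice_dir {Z : Set V} :
    ∀ (C' : List V) (a : V), (a :: C').Chain' G.adj → (a :: C').Nodup →
      TriplesOK G Z (a :: C') →
      ∀ (q : List V) (b : V), q.Chain' G.dir → q.Nodup →
        q.head? = (a :: C').getLast? → q.getLast? = some b → b ∉ (a :: C') →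
        (∀ v ∈ q, v ∉ Z) →
        ∃ (e : V) (P : List V),
          (a :: e :: P).Chain' G.adj ∧ (a :: e :: P).Nodup ∧
          (a :: e :: P).getLast? = some b ∧ TriplesOK G Z (a :: e :: P) ∧
          (∀ v ∈ a :: e :: P, v ∈ (a :: C') ∨ v ∈ q) ∧
          ((G.dir a e ∧ a ∈ q) ∨ ∃ t, C' = e :: t) := by
  intro C'
  induction C' with
  | nil =>
    intro a hch hnd htr q b hqch hqnd hqh hql hqb hz
    -- a is the head of q
    have ha : a ∈ q := by
      cases q with
      | nil => simp at hqh
      | cons c t => simp at hqh; simp [hqh]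
    obtain ⟨q₁, q₂, rfl⟩ := List.append_of_mem ha
    have hab : a ≠ b := fun h => hqb (h ▸ (List.mem_cons_self (a := a) (l := [])))
    obtain ⟨e, rest, rfl⟩ : ∃ e rest, q₂ = e :: rest := by
      cases q₂ with
      | nil =>
        exfalso
        rw [getLast?_append_ne (by simp)] at hql
        simp at hql
        exact hab hql
      | cons e rest => exact ⟨e, rest, rfl⟩
    have hsuf : (a :: e :: rest) <:+ (q₁ ++ a :: e :: rest) := ⟨q₁, rfl⟩
    have hch' : (a :: e :: rest).Chain' G.dir := hqch.suffix hsuf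
    refine ⟨e, rest, hch'.imp (fun _ _ h => Or.inl h), hsuf.sublist.nodup hqnd, ?_, ?_, ?_, ?_⟩
    · rw [← hql, getLast?_append_ne (by simp)]
    · refine triplesOK_of_dir_chain hch' ?_
      intro v hv
      exact hz v (hsuf.subset hv)
    · intro v hv
      exact Or.inr (hsuf.subset hv)
    · exact Or.inl ⟨(List.isChain_cons_cons.1 hch').1, ha⟩
  | cons a₂ C'' ih =>
    intro a hch hnd htr q b hqch hqnd hqh hql hqb hz
    by_cases ha : a ∈ q
    · -- same base construction
      obtain ⟨q₁, q₂, rfl⟩ := List.append_of_mem ha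
      have hab : a ≠ b := fun h => hqb (h ▸ (List.mem_cons_self (a := a)))
      obtain ⟨e, rest, rfl⟩ : ∃ e rest, q₂ = e :: rest := by
        cases q₂ with
        | nil =>
          exfalso
          rw [getLast?_append_ne (by simp)] at hql
          simp at hql
          exact hab hql
        | cons e rest => exact ⟨e, rest, rfl⟩
      have hsuf : (a :: e :: rest) <:+ (q₁ ++ a :: e :: rest) := ⟨q₁, rfl⟩
      have hch' : (a :: e :: rest).Chain' G.dir := hqch.suffix hsuf
      refine ⟨e, rest, hch'.imp (fun _ _ h => Or.inl h), hsuf.sublist.nodup hqnd, ?_, ?_, ?_, ?_⟩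
      · rw [← hql, getLast?_append_ne (by simp)]
      · refine triplesOK_of_dir_chain hch' ?_
        intro v hv
        exact hz v (hsuf.subset hv)
      · intro v hv
        exact Or.inr (hsuf.subset hv)
      · exact Or.inl ⟨(List.isChain_cons_cons.1 hch').1, ha⟩
    · -- recurse on the tail
      have hqh' : q.head? = (a₂ :: C'').getLast? := by
        rw [hqh, getLast?_cons_ne (by simp)]
      obtain ⟨e', P', h1, h2, h3, h4, h5, h6⟩ :=
        ih a₂ hch.tail (List.nodup_cons.1 hnd).2 (triplesOK_tail htr) q b hqch hqnd hqh'
          hql (fun hb => hqb (List.mem_cons_of_mem _ hb)) hz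
      have hanotin : a ∉ a₂ :: e' :: P' := by
        intro hmem
        rcases h5 a hmem with hmem' | hmem'
        · exact (List.nodup_cons.1 hnd).1 hmem'
        · exact ha hmem'
      refine ⟨a₂, e' :: P', List.isChain_cons_cons.2 ⟨(List.isChain_cons_cons.1 hch).1, h1⟩,
        List.nodup_cons.2 ⟨hanotin, h2⟩, by rw [getLast?_cons_ne (by simp)]; exact h3,
        ?_, ?_, Or.inr ⟨C'', rfl⟩⟩
      · -- triples
        intro i hi
        rcases i with _ | i
        · -- the new junction triple (a, a₂, e')
          simp only [List.getElem_cons_zero, List.getElem_cons_succ]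
          rcases h6 with ⟨hde, hmem⟩ | ⟨t, hC⟩
          · exact ⟨fun hp => absurd hp.2 (not_arrowInto_of_dir hde), fun _ => hz _ hmem⟩
          · have := htr 0 (by rw [hC]; simp)
            simp only [List.getElem_cons_zero, List.getElem_cons_succ, hC] at this
            simpa using this
        · have := h4 i (by simp at hi ⊢; omega)
          simpa only [List.getElem_cons_succ] using this
      · intro v hv
        rcases List.mem_cons.1 hv with rfl | hv'
        · exact Or.inl (List.mem_cons_self)
        · rcases h5 v hv' with h | h
          · exact Or.inl (List.mem_cons_of_mem _ h)
          · exact Or.inr h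


lemma head_getElem {l : List V} {a : V} (h : l.head? = some a) (h0 : 0 < l.length) :
    l[0] = a := by
  rw [List.head?_eq_getElem?, List.getElem?_eq_getElem h0] at h
  exact Option.some.inj h

lemma last_getElem {l : List V} {a : V} (h : l.getLast? = some a) (h0 : 0 < l.length) :
    l[l.length - 1]'(by omega) = a := by
  rw [List.getLast?_eq_getElem?, List.getElem?_eq_getElem (by omega)] at h
  exact Option.some.inj h

lemma getLast?_take_elem {l : List V} {k : ℕ} (h : k < l.length) :
    (l.take (k+1)).getLast? = some l[k] := by
  rw [List.getLast?_eq_getElem?, List.length_take]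
  have h1 : min (k+1) l.length = k + 1 := by omega
  rw [h1]
  simp only [Nat.add_sub_cancel]
  rw [List.getElem?_take, if_pos (by omega)]
  exact List.getElem?_eq_getElem h

lemma head?_drop_elem {l : List V} {k : ℕ} (h : k < l.length) :
    (l.drop k).head? = some l[k] := by
  rw [List.head?_drop]; exact List.getElem?_eq_getElem h

lemma getLast?_drop {l : List V} {k : ℕ} (h : k < l.length) :
    (l.drop k).getLast? = l.getLast? := by
  conv_rhs => rw [← List.take_append_drop k l]
  rw [getLast?_append_ne]
  intro h0
  have := congrArg List.length h0
  simp at this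
  omega

/-- Packaged version of `splice_dir`. -/
lemma splice_dir' {Z : Set V} {C q : List V} {a b : V}
    (hCh : C.head? = some a)
    (hch : C.Chain' G.adj) (hnd : C.Nodup) (htr : TriplesOK G Z C)
    (hqch : q.Chain' G.dir) (hqnd : q.Nodup) (hqh : q.head? = C.getLast?)
    (hql : q.getLast? = some b) (hqb : b ∉ C) (hz : ∀ v ∈ q, v ∉ Z) :
    ∃ P : List V, P.Chain' G.adj ∧ P.Nodup ∧ P.head? = some a ∧ P.getLast? = some b ∧
      2 ≤ P.length ∧ TriplesOK G Z P ∧ (∀ v ∈ P, v ∈ C ∨ v ∈ q) := by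
  obtain ⟨C', rfl⟩ : ∃ C', C = a :: C' := by
    cases C with
    | nil => simp at hCh
    | cons c t => simp at hCh; exact ⟨t, by rw [hCh]⟩
  obtain ⟨e, P, h1, h2, h3, h4, h5, -⟩ :=
    splice_dir C' a hch hnd htr q b hqch hqnd hqh hql hqb hz
  exact ⟨a :: e :: P, h1, h2, rfl, h3, by simp, h4, h5⟩

/-- Facts about the segment `[p[a], ..., p[a+b-1]]` of a path. -/
lemma segment_facts {p : List V} (hch : p.Chain' G.adj) (hnd : p.Nodup)
    {a b : ℕ} (hb : 1 ≤ b) (hab : a + b ≤ p.length) :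
    ((p.drop a).take b).length = b ∧
    ((p.drop a).take b).Chain' G.adj ∧ ((p.drop a).take b).Nodup ∧
    (∀ i, ∀ h : i < b, ((p.drop a).take b)[i]'(by
        simp only [List.length_take, List.length_drop, lt_min_iff]; omega) = p[a+i]'(by omega)) ∧
    ((p.drop a).take b).head? = some (p[a]'(by omega)) ∧
    ((p.drop a).take b).getLast? = some (p[a + (b-1)]'(by omega)) := by
  have hlen : ((p.drop a).take b).length = b := by
    simp only [List.length_take, List.length_drop, lt_min_iff]; omega
  have hget : ∀ i, ∀ h : i < b, ((p.drop a).take b)[i]'(by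
      simp only [List.length_take, List.length_drop, lt_min_iff]; omega) = p[a+i]'(by omega) := by
    intro i h
    rw [List.getElem_take, List.getElem_drop]
  refine ⟨hlen, ((hch.suffix (List.drop_suffix _ _)).prefix (List.take_prefix _ _)), 
    ((List.take_sublist _ _).trans (List.drop_sublist _ _)).nodup hnd, hget, ?_, ?_⟩
  · rw [List.head?_eq_getElem?, List.getElem?_eq_getElem (by omega)]
    have := hget 0 (by omega)
    simp only [this, Nat.add_zero]
  · rw [List.getLast?_eq_getElem?, hlen, List.getElem?_eq_getElem (by rw [hlen]; omega)]
    have := hget (b-1) (by omega)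
    simp only [this]

lemma segment_mem {p : List V} {a b : ℕ} (hab : a + b ≤ p.length) {v : V}
    (hv : v ∈ (p.drop a).take b) :
    ∃ j, j < b ∧ ∃ h : a + j < p.length, v = p[a+j] := by
  obtain ⟨j, hj, hje⟩ := List.mem_iff_getElem.1 hv
  simp only [List.length_take, List.length_drop, lt_min_iff] at hj
  refine ⟨j, by omega, by omega, ?_⟩
  rw [← hje, List.getElem_take, List.getElem_drop]

lemma segment_triplesOK {Z : Set V} {p : List V} {a b : ℕ}
    (hpairs : ∀ i, ∀ h : i + 2 < p.length,
      ArrowInto G p[i] p[i+1] ∧ ArrowInto G p[i+2] p[i+1])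
    (hab : a + b ≤ p.length)
    (hgood : ∀ i, ∀ h1 : a ≤ i, ∀ h2 : i + 2 < a + b, ∃ d ∈ Z, Ancestor G (p[i+1]'(by omega)) d) :
    TriplesOK G Z ((p.drop a).take b) := by
  intro i hi
  simp only [List.length_take, List.length_drop, lt_min_iff] at hi
  have h2 : a + i + 2 < p.length := by omega
  have e0 : ((p.drop a).take b)[i]'(by simp only [List.length_take, List.length_drop, lt_min_iff]; omega)
      = p[a+i]'(by omega) := by rw [List.getElem_take, List.getElem_drop]
  have e1 : ((p.drop a).take b)[i+1]'(by simp only [List.length_take, List.length_drop, lt_min_iff]; omega)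
      = p[a+i+1]'(by omega) := by rw [List.getElem_take, List.getElem_drop]; rfl
  have e2 : ((p.drop a).take b)[i+2]'(by simp only [List.length_take, List.length_drop, lt_min_iff]; omega)
      = p[a+i+2]'(by omega) := by rw [List.getElem_take, List.getElem_drop]; rfl
  rw [e0, e1, e2]
  have hg : ∃ d ∈ Z, Ancestor G (p[a+i+1]'(by omega)) d := hgood (a+i) (by omega) (by omega)
  exact ⟨fun _ => hg, fun hnp => absurd (hpairs (a+i) h2) hnp⟩

/-- Reverse a path-with-data to get an m-connection. -/
lemma mconn_of_data_rev {Z : Set V} {L : List V} {a b : V}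
    (h1 : L.Chain' G.adj) (h2 : L.Nodup) (h3 : L.head? = some a)
    (h4 : L.getLast? = some b) (h5 : 2 ≤ L.length) (h6 : TriplesOK G Z L)
    (ha : a ∉ Z) (hb : b ∉ Z) : MConn G Z b a :=
  ⟨L.reverse, mconnPath_of_triples (chain'_adj_reverse h1) (List.nodup_reverse.2 h2)
    (by rw [List.head?_reverse, h4]) (by rw [List.getLast?_reverse, h3]) (by simpa)
    (triplesOK_reverse h6) hb ha⟩

/-- An inducing path (all intermediates colliders, each an ancestor of an endpoint)
m-connects its endpoints given any set avoiding the endpoints. -/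
lemma inducing_connects {Z₀ : Set V} {p : List V} {S y : V}
    (hch : p.Chain' G.adj) (hnd : p.Nodup) (hh : p.head? = some S)
    (hl : p.getLast? = some y) (hlen : 3 ≤ p.length) (hSy : S ≠ y)
    (hpairs : ∀ i, ∀ h : i + 2 < p.length,
      ArrowInto G p[i] p[i+1] ∧ ArrowInto G p[i+2] p[i+1])
    (hanc : ∀ i, ∀ h : i + 2 < p.length,
      Ancestor G p[i+1] S ∨ Ancestor G p[i+1] y)
    (hS : S ∉ Z₀) (hy : y ∉ Z₀) : MConn G Z₀ S y := by
  classical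
  have h0 : p[0]'(by omega) = S := head_getElem hh (by omega)
  have hny : p[p.length-1]'(by omega) = y := last_getElem hl (by omega)
  by_cases hbad : ∃ i, ∃ h : i + 2 < p.length,
      ¬∃ d ∈ Z₀, Ancestor G (p[i+1]'(by omega)) d
  swap
  · -- no bad collider: p itself m-connects
    push_neg at hbad
    refine ⟨p, mconnPath_of_triples hch hnd hh hl (by omega) ?_ hS hy⟩
    intro i hi
    exact ⟨fun _ => hbad i hi, fun hnp => absurd (hpairs i hi) hnp⟩
  -- some bad collider exists
  by_cases hQex : ∃ i, (∃ h : i + 2 < p.length,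
      ¬∃ d ∈ Z₀, Ancestor G (p[i+1]'(by omega)) d) ∧
      (∃ h : i + 2 < p.length, Ancestor G (p[i+1]'(by omega)) y)
  · -- there is a bad collider that is an ancestor of y; take the least one, m
    obtain ⟨m, ⟨⟨hmlt, hmbad⟩, hmyE⟩, hmmin⟩ :
        ∃ m, ((∃ h : m + 2 < p.length,
            ¬∃ d ∈ Z₀, Ancestor G (p[m+1]'(by omega)) d) ∧
          (∃ h : m + 2 < p.length, Ancestor G (p[m+1]'(by omega)) y)) ∧
          ∀ j, j < m → ¬((∃ h : j + 2 < p.length,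
            ¬∃ d ∈ Z₀, Ancestor G (p[j+1]'(by omega)) d) ∧
          (∃ h : j + 2 < p.length, Ancestor G (p[j+1]'(by omega)) y)) :=
      ⟨Nat.find hQex, Nat.find_spec hQex, fun j hj => Nat.find_min hQex hj⟩
    obtain ⟨hm2, hmy⟩ := hmyE
    -- directed escape path q2 from p[m+1] to y
    have hme : p[m+1]'(by omega) ≠ y := by
      intro he
      have he' : p[m+1]'(by omega) = p[p.length-1]'(by omega) := by rw [he, hny]
      have := hnd.getElem_inj_iff.1 he'
      omega
    obtain ⟨q2, hq2⟩ : ∃ q2, IsDirectedPath G q2 (p[m+1]'(by omega)) y := by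
      rcases hmy with he | hq2
      · exact absurd he hme
      · exact hq2
    obtain ⟨hq2ch, hq2nd, hq2h, hq2l, hq2len⟩ := hq2
    have hq2z : ∀ v ∈ q2, v ∉ Z₀ := fun v hv hvZ =>
      hmbad ⟨v, hvZ, (dirpath_mem_anc ⟨hq2ch, hq2nd, hq2h, hq2l, hq2len⟩ hv).1⟩
    by_cases hsj : ∃ j, j < m ∧ ∃ h : j + 2 < p.length,
        ¬∃ d ∈ Z₀, Ancestor G (p[j+1]'(by omega)) d
    · -- an earlier bad collider exists; take the greatest one, sj (ancestor of S)
      obtain ⟨sj, ⟨hsjm, hsjlt, hsjbad⟩, hsjmax⟩ :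
          ∃ sj, (sj < m ∧ ∃ h : sj + 2 < p.length,
              ¬∃ d ∈ Z₀, Ancestor G (p[sj+1]'(by omega)) d) ∧
            ∀ k, sj < k → k < m →
              ¬∃ h : k + 2 < p.length, ¬∃ d ∈ Z₀, Ancestor G (p[k+1]'(by omega)) d := by
        obtain ⟨j, hj⟩ := hsj
        set Pr : ℕ → Prop := fun k => k < m ∧ ∃ h : k + 2 < p.length,
            ¬∃ d ∈ Z₀, Ancestor G (p[k+1]'(by omega)) d with hPr
        refine ⟨Nat.findGreatest Pr m, ?_, ?_⟩
        · exact Nat.findGreatest_spec (P := Pr) (le_of_lt hj.1) hj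
        · intro k hk hkm hP
          exact Nat.findGreatest_is_greatest (P := Pr) hk (le_of_lt hkm) ⟨hkm, hP⟩
      have hsjS : Ancestor G (p[sj+1]'(by omega)) S := by
        rcases hanc sj (by omega) with h | h
        · exact h
        · exact absurd ⟨⟨by omega, hsjbad⟩, ⟨by omega, h⟩⟩ (hmmin sj hsjm)
      have hsjne : p[sj+1]'(by omega) ≠ S := by
        intro he
        have he' : p[sj+1]'(by omega) = p[0]'(by omega) := by rw [he, h0]
        have := hnd.getElem_inj_iff.1 he'
        omega
      obtain ⟨q1, hq1⟩ : ∃ q1, IsDirectedPath G q1 (p[sj+1]'(by omega)) S := by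
        rcases hsjS with he | hq1
        · exact absurd he hsjne
        · exact hq1
      obtain ⟨hq1ch, hq1nd, hq1h, hq1l, hq1len⟩ := hq1
      have hq1z : ∀ v ∈ q1, v ∉ Z₀ := fun v hv hvZ =>
        hsjbad ⟨v, hvZ, (dirpath_mem_anc ⟨hq1ch, hq1nd, hq1h, hq1l, hq1len⟩ hv).1⟩
      by_cases hSq2 : S ∈ q2
      · -- the escape path to y passes through S: its suffix is a directed S→y path
        obtain ⟨r, r', rfl⟩ := List.append_of_mem hSq2
        have hr' : r' ≠ [] := by
          intro h
          subst h
          rw [getLast?_append_ne (by simp)] at hq2l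
          simp at hq2l
          exact hSy hq2l
        have hsuf : (S :: r') <:+ (r ++ S :: r') := ⟨r, rfl⟩
        have hch' : (S :: r').Chain' G.dir := hq2ch.suffix hsuf
        refine ⟨S :: r', mconnPath_of_triples (hch'.imp fun _ _ h => Or.inl h)
          (hsuf.sublist.nodup hq2nd) rfl (by rw [← hq2l, getLast?_append_ne (by simp)])
          (by cases r' with | nil => exact absurd rfl hr' | cons c t => simp)
          (triplesOK_of_dir_chain hch' (fun v hv => hq2z v (hsuf.subset hv))) hS hy⟩
      · -- middle segment M from p[sj+1] to p[m+1]
        obtain ⟨hMlen, hMch, hMnd, hMget, hMh, hMl⟩ :=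
          segment_facts (a := sj+1) (b := m+1-sj) hch hnd (by omega) (by omega)
        have hMtr : TriplesOK G Z₀ ((p.drop (sj+1)).take (m+1-sj)) := by
          refine segment_triplesOK hpairs (by omega) ?_
          intro i hi hi2
          by_contra hbad'
          exact hsjmax i (by omega) (by omega) ⟨by omega, hbad'⟩
        have hyM : y ∉ (p.drop (sj+1)).take (m+1-sj) := by
          intro hyM
          obtain ⟨j, hj, hj2, hje⟩ := segment_mem (by omega) hyM
          have he' : p[sj+1+j]'(by omega) = p[p.length-1]'(by omega) := by
            rw [← hje, hny]
          have := hnd.getElem_inj_iff.1 he'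
          omega
        have hMlast : ((p.drop (sj+1)).take (m+1-sj)).getLast? = some (p[m+1]'(by omega)) := by
          rw [hMl]
          have : sj + 1 + (m + 1 - sj - 1) = m + 1 := by omega
          simp only [this]
        obtain ⟨PR, hPR1, hPR2, hPR3, hPR4, hPR5, hPR6, hPR7⟩ :=
          splice_dir' (Z := Z₀) (b := y) hMh hMch hMnd hMtr hq2ch hq2nd
            (by rw [hq2h, hMlast]) hq2l hyM hq2z
        have hSPR : S ∉ PR := by
          intro hmem
          rcases hPR7 S hmem with h | h
          · obtain ⟨j, hj, hj2, hje⟩ := segment_mem (by omega) h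
            have he' : p[sj+1+j]'(by omega) = p[0]'(by omega) := by rw [← hje, h0]
            have := hnd.getElem_inj_iff.1 he'
            omega
          · exact hSq2 h
        obtain ⟨L3, hL1, hL2, hL3, hL4, hL5, hL6, -⟩ :=
          splice_dir' (Z := Z₀) (b := S) (C := PR.reverse)
            (by rw [List.head?_reverse, hPR4]) (chain'_adj_reverse hPR1)
            (List.nodup_reverse.2 hPR2) (triplesOK_reverse hPR6) hq1ch hq1nd
            (by rw [hq1h, List.getLast?_reverse, hPR3]) hq1l
            (by rw [List.mem_reverse]; exact hSPR) hq1z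
        exact mconn_of_data_rev hL1 hL2 hL3 hL4 hL5 hL6 hy hS
    · -- no earlier bad collider: the prefix of p up to p[m+1] works
      obtain ⟨hClen, hCch, hCnd, hCget, hCh, hCl⟩ :=
        segment_facts (a := 0) (b := m+2) hch hnd (by omega) (by omega)
      have hCtr : TriplesOK G Z₀ ((p.drop 0).take (m+2)) := by
        refine segment_triplesOK hpairs (by omega) ?_
        intro i hi hi2
        by_contra hbad'
        exact hsj ⟨i, by omega, by omega, hbad'⟩
      have hyC : y ∉ (p.drop 0).take (m+2) := by
        intro hyC
        obtain ⟨j, hj, hj2, hje⟩ := segment_mem (by omega) hyC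
        have he' : p[0+j]'(by omega) = p[p.length-1]'(by omega) := by rw [← hje, hny]
        have := hnd.getElem_inj_iff.1 he'
        omega
      have hCh' : ((p.drop 0).take (m+2)).head? = some S := by
        rw [hCh]
        simp only [h0]
      have hClast : ((p.drop 0).take (m+2)).getLast? = some (p[m+1]'(by omega)) := by
        rw [hCl]
        have : 0 + (m + 2 - 1) = m + 1 := by omega
        simp only [this]
      obtain ⟨Pl, h1, h2, h3, h4, h5, h6, h7⟩ :=
        splice_dir' (Z := Z₀) (b := y) hCh' hCch hCnd hCtr hq2ch hq2nd
          (by rw [hq2h, hClast]) hq2l hyC hq2z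
      exact ⟨Pl, mconnPath_of_triples h1 h2 h3 h4 h5 h6 hS hy⟩
  · -- all bad colliders are ancestors of S; take the greatest one, sj
    obtain ⟨j0, hj0⟩ := hbad
    obtain ⟨sj, ⟨hsjlt, hsjbad⟩, hsjmax⟩ :
        ∃ sj, (∃ h : sj + 2 < p.length,
            ¬∃ d ∈ Z₀, Ancestor G (p[sj+1]'(by omega)) d) ∧
          ∀ k, sj < k →
            ¬∃ h : k + 2 < p.length, ¬∃ d ∈ Z₀, Ancestor G (p[k+1]'(by omega)) d := by
      set Pr : ℕ → Prop := fun k => ∃ h : k + 2 < p.length,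
          ¬∃ d ∈ Z₀, Ancestor G (p[k+1]'(by omega)) d with hPr
      refine ⟨Nat.findGreatest Pr p.length,
        Nat.findGreatest_spec (P := Pr) (by obtain ⟨h, -⟩ := hj0; omega) hj0, ?_⟩
      intro k hk hP
      obtain ⟨h, h2⟩ := hP
      exact Nat.findGreatest_is_greatest (P := Pr) hk (by omega) ⟨h, h2⟩
    have hsjS : Ancestor G (p[sj+1]'(by omega)) S := by
      rcases hanc sj (by omega) with h | h
      · exact h
      · exact absurd ⟨⟨by omega, hsjbad⟩, ⟨by omega, h⟩⟩ (not_exists.1 hQex sj)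
    have hsjne : p[sj+1]'(by omega) ≠ S := by
      intro he
      have he' : p[sj+1]'(by omega) = p[0]'(by omega) := by rw [he, h0]
      have := hnd.getElem_inj_iff.1 he'
      omega
    obtain ⟨q1, hq1⟩ : ∃ q1, IsDirectedPath G q1 (p[sj+1]'(by omega)) S := by
      rcases hsjS with he | hq1
      · exact absurd he hsjne
      · exact hq1
    obtain ⟨hq1ch, hq1nd, hq1h, hq1l, hq1len⟩ := hq1
    have hq1z : ∀ v ∈ q1, v ∉ Z₀ := fun v hv hvZ =>
      hsjbad ⟨v, hvZ, (dirpath_mem_anc ⟨hq1ch, hq1nd, hq1h, hq1l, hq1len⟩ hv).1⟩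
    -- suffix segment E from p[sj+1] to y
    obtain ⟨hElen, hEch, hEnd, hEget, hEh, hEl⟩ :=
      segment_facts (a := sj+1) (b := p.length - sj - 1) hch hnd (by omega) (by omega)
    have hEtr : TriplesOK G Z₀ ((p.drop (sj+1)).take (p.length - sj - 1)) := by
      refine segment_triplesOK hpairs (by omega) ?_
      intro i hi hi2
      by_contra hbad'
      exact hsjmax i (by omega) ⟨by omega, hbad'⟩
    have hElast : ((p.drop (sj+1)).take (p.length - sj - 1)).getLast? = some y := by
      rw [hEl]
      have : sj + 1 + (p.length - sj - 1 - 1) = p.length - 1 := by omega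
      simp only [this, hny]
    have hSE : S ∉ (p.drop (sj+1)).take (p.length - sj - 1) := by
      intro hmem
      obtain ⟨j, hj, hj2, hje⟩ := segment_mem (by omega) hmem
      have he' : p[sj+1+j]'(by omega) = p[0]'(by omega) := by rw [← hje, h0]
      have := hnd.getElem_inj_iff.1 he'
      omega
    obtain ⟨L3, hL1, hL2, hL3, hL4, hL5, hL6, -⟩ :=
      splice_dir' (Z := Z₀) (b := S)
        (C := ((p.drop (sj+1)).take (p.length - sj - 1)).reverse)
        (by rw [List.head?_reverse, hElast]) (chain'_adj_reverse hEch)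
        (List.nodup_reverse.2 hEnd) (triplesOK_reverse hEtr) hq1ch hq1nd
        (by rw [hq1h, List.getLast?_reverse, hEh]) hq1l
        (by rw [List.mem_reverse]; exact hSE) hq1z
    exact mconn_of_data_rev hL1 hL2 hL3 hL4 hL5 hL6 hy hS


lemma dir_of_adj_not_arrowInto {u v : V} (hadj : G.adj u v) (hna : ¬ ArrowInto G v u) :
    G.dir u v := by
  rcases hadj with h | h | h
  · exact h
  · exact absurd (Or.inl h) hna
  · exact absurd (Or.inr (G.bidir_symm _ _ h)) hna

lemma no_intermediate_pair {a b w : V} : ¬ IsIntermediateOn [a, b] w := by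
  rintro ⟨u, v, l₁, l₂, he⟩
  have := congrArg List.length he
  simp at this
  omega

/-- Every vertex on a path whose colliders are all ancestors of `S` or `y` is itself
an ancestor of `S` or `y`. -/
lemma path_vertices_anc {p : List V} {S y : V}
    (hch : p.Chain' G.adj) (hh : p.head? = some S) (hl : p.getLast? = some y)
    (hlen : 2 ≤ p.length)
    (hcol : ∀ i, ∀ h : i + 2 < p.length,
      (ArrowInto G p[i] p[i+1] ∧ ArrowInto G p[i+2] p[i+1]) →
      Ancestor G p[i+1] S ∨ Ancestor G p[i+1] y) :
    ∀ i, ∀ h : i < p.length, Ancestor G p[i] S ∨ Ancestor G p[i] y := by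
  have h0 : p[0]'(by omega) = S := head_getElem hh (by omega)
  have hny : p[p.length-1]'(by omega) = y := last_getElem hl (by omega)
  -- rightward directed propagation
  have Rt : ∀ k i, ∀ hi : i + 1 < p.length, p.length - i ≤ k →
      G.dir (p[i]'(by omega)) (p[i+1]'(by omega)) →
      Ancestor G (p[i+1]'(by omega)) S ∨ Ancestor G (p[i+1]'(by omega)) y := by
    intro k
    induction k with
    | zero => intro i hi hk; omega
    | succ k ih =>
      intro i hi hk hdir
      by_cases hend : i + 2 = p.length
      · have : p[i+1]'(by omega) = p[p.length-1]'(by omega) := by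
          have : i + 1 = p.length - 1 := by omega
          simp only [this]
        rw [this, hny]
        exact Or.inr (ancestor_refl y)
      · have hi2 : i + 2 < p.length := by omega
        by_cases hpair : ArrowInto G (p[i]'(by omega)) (p[i+1]'(by omega)) ∧
            ArrowInto G (p[i+2]'(by omega)) (p[i+1]'(by omega))
        · exact hcol i hi2 hpair
        · have hna : ¬ ArrowInto G (p[i+2]'(by omega)) (p[i+1]'(by omega)) := by
            intro hn
            exact hpair ⟨Or.inl hdir, hn⟩
          have hdir2 : G.dir (p[i+1]'(by omega)) (p[i+2]'(by omega)) :=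
            dir_of_adj_not_arrowInto (chain'_getElem hch (i+1) (by omega)) hna
          have := ih (i+1) (by omega) (by omega) hdir2
          have hstep : Ancestor G (p[i+1]'(by omega)) (p[i+2]'(by omega)) :=
            ancestor_of_dir hdir2
          rcases this with h | h
          · exact Or.inl (ancestor_trans hstep h)
          · exact Or.inr (ancestor_trans hstep h)
  -- leftward directed propagation
  have Lt : ∀ k i, ∀ hi : i + 1 < p.length, i < k →
      G.dir (p[i+1]'(by omega)) (p[i]'(by omega)) →
      Ancestor G (p[i]'(by omega)) S ∨ Ancestor G (p[i]'(by omega)) y := by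
    intro k
    induction k with
    | zero => intro i hi hk; omega
    | succ k ih =>
      intro i hi hk hdir
      by_cases hstart : i = 0
      · subst hstart
        rw [h0]
        exact Or.inl (ancestor_refl S)
      · have hi1 : 1 ≤ i := by omega
        have hidx : i - 1 + 1 = i := by omega
        have hidx2 : i - 1 + 2 = i + 1 := by omega
        by_cases hpair : ArrowInto G (p[i-1]'(by omega)) (p[i]'(by omega)) ∧
            ArrowInto G (p[i+1]'(by omega)) (p[i]'(by omega))
        · have := hcol (i-1) (by omega)
          simp only [hidx, hidx2] at this
          exact this hpair
        · have hna : ¬ ArrowInto G (p[i-1]'(by omega)) (p[i]'(by omega)) := by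
            intro hn
            exact hpair ⟨hn, Or.inl hdir⟩
          have hadj : G.adj (p[i-1]'(by omega)) (p[i]'(by omega)) := by
            have := chain'_getElem hch (i-1) (by omega)
            simp only [hidx] at this
            exact this
          have hdir2 : G.dir (p[i]'(by omega)) (p[i-1]'(by omega)) :=
            dir_of_adj_not_arrowInto (adj_symm hadj) (by
              intro hn
              exact hna hn)
          have hrec := ih (i-1) (by omega) (by omega) (by
            simp only [hidx]
            exact hdir2)
          have hstep : Ancestor G (p[i]'(by omega)) (p[i-1]'(by omega)) := ancestor_of_dir hdir2
          rcases hrec with h | h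
          · exact Or.inl (ancestor_trans hstep h)
          · exact Or.inr (ancestor_trans hstep h)
  intro i hi
  by_cases hiz : i = 0
  · subst hiz
    rw [h0]
    exact Or.inl (ancestor_refl S)
  by_cases hie : i = p.length - 1
  · subst hie
    rw [hny]
    exact Or.inr (ancestor_refl y)
  have hi1 : 1 ≤ i := by omega
  have hi2 : i + 1 < p.length := by omega
  have hidx : i - 1 + 1 = i := by omega
  have hidx2 : i - 1 + 2 = i + 1 := by omega
  by_cases hpair : ArrowInto G (p[i-1]'(by omega)) (p[i]'(by omega)) ∧
      ArrowInto G (p[i+1]'(by omega)) (p[i]'(by omega))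
  · have := hcol (i-1) (by omega)
    simp only [hidx, hidx2] at this
    exact this hpair
  · by_cases hA : ArrowInto G (p[i-1]'(by omega)) (p[i]'(by omega))
    · have hna : ¬ ArrowInto G (p[i+1]'(by omega)) (p[i]'(by omega)) := by
        intro hn
        exact hpair ⟨hA, hn⟩
      have hdir : G.dir (p[i]'(by omega)) (p[i+1]'(by omega)) :=
        dir_of_adj_not_arrowInto (chain'_getElem hch i (by omega)) hna
      have hstep : Ancestor G (p[i]'(by omega)) (p[i+1]'(by omega)) := ancestor_of_dir hdir
      rcases Rt p.length i (by omega) (by omega) hdir with h | h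
      · exact Or.inl (ancestor_trans hstep h)
      · exact Or.inr (ancestor_trans hstep h)
    · have hadj : G.adj (p[i-1]'(by omega)) (p[i]'(by omega)) := by
        have := chain'_getElem hch (i-1) (by omega)
        simp only [hidx] at this
        exact this
      have hdir : G.dir (p[i]'(by omega)) (p[i-1]'(by omega)) :=
        dir_of_adj_not_arrowInto (adj_symm hadj) hA
      have hstep : Ancestor G (p[i]'(by omega)) (p[i-1]'(by omega)) := ancestor_of_dir hdir
      rcases Lt p.length (i-1) (by omega) (by omega) (by
          simp only [hidx]
          exact hdir) with h | h
      · exact Or.inl (ancestor_trans hstep h)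
      · exact Or.inr (ancestor_trans hstep h)

end Aux

/-- Unshielded-collider case in Scenario 2 of the proof of Theorem 4
(necessity of rule R2(ii)). -/
theorem rule_R2_necessary_unshielded
    {V : Type*} [Fintype V] (G : MixedGraph V) (x y : V) (O : Set V)
    (h : Pretreatment G x y O) (hbi : G.bidir x y)
    (S : V) (hS : S ∈ O) (hSx : G.adj S x) (hSy : ¬ G.adj S y) :
    ∃ Z ⊆ MarkovBlanket G y \ {x}, S ∉ Z ∧ MSep G Z S y ∧ MConn G Z S x := by
  classical
  obtain ⟨⟨hmag1, hmag2, hmag3⟩, hxy, hxO, hyO, hcover, hyx, hxAncO, hyAncO⟩ := h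
  have hmem : ∀ v : V, v = x ∨ v = y ∨ v ∈ O := by
    intro v
    have hv : v ∈ ({x, y} ∪ O : Set V) := by
      rw [← hcover]; trivial
    simpa [Set.mem_union, Set.mem_insert_iff, Set.mem_singleton_iff, or_assoc] using hv
  have hSx' : S ≠ x := fun he => hxO (he ▸ hS)
  have hSy' : S ≠ y := fun he => hyO (he ▸ hS)
  have hxd : ∀ v, ¬ G.dir x v := by
    intro v hv
    rcases hmem v with he | he | hvO
    · rw [he] at hv; exact G.dir_irrefl _ hv
    · rw [he] at hv; exact hmag2 x y hbi (ancestor_of_dir hv)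
    · exact hxAncO v hvO (ancestor_of_dir hv)
  have hyd : ∀ v, ¬ G.dir y v := by
    intro v hv
    rcases hmem v with he | he | hvO
    · rw [he] at hv; exact hyx (ancestor_of_dir hv)
    · rw [he] at hv; exact G.dir_irrefl _ hv
    · exact hyAncO v hvO (ancestor_of_dir hv)
  have harr_x : ∀ u, G.adj u x → ArrowInto G u x := by
    intro u hu
    rcases hu with h' | h' | h'
    · exact Or.inl h'
    · exact absurd h' (hxd u)
    · exact Or.inr h'
  set Z : Set V :=
    {v | v ∈ MarkovBlanket G y ∧ v ≠ x ∧ v ≠ S ∧ (Ancestor G v S ∨ Ancestor G v y)} with hZ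
  have hxZ : x ∉ Z := fun hx => hx.2.1 rfl
  have hSZ : S ∉ Z := fun hs => hs.2.2.1 rfl
  refine ⟨Z, fun v hv => ⟨hv.1, by simpa using hv.2.1⟩, hSZ, ?_, ?_⟩
  · -- m-separation of S and y given Z
    intro p hm
    have ht := triples_of_mconnPath hm
    obtain ⟨⟨hch, hnd, hh, hl, hlen⟩, -, -, -, -⟩ := hm
    have hlen3 : 3 ≤ p.length := by
      by_contra hl3
      have hl2 : p.length = 2 := by omega
      have e0 : p[0]'(by omega) = S := head_getElem hh (by omega)
      have e1 : p[1]'(by omega) = y := by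
        have h1 := last_getElem hl (by omega)
        have h2 : p.length - 1 = 1 := by omega
        simp only [h2] at h1
        exact h1
      have : G.adj S y := by
        have := chain'_getElem hch 0 (by omega)
        rwa [e0, e1] at this
      exact hSy this
    have e0 : p[0]'(by omega) = S := head_getElem hh (by omega)
    have eny : p[p.length-1]'(by omega) = y := last_getElem hl (by omega)
    have hcolanc : ∀ i, ∀ hI : i + 2 < p.length,
        (ArrowInto G (p[i]'(by omega)) (p[i+1]'(by omega)) ∧
          ArrowInto G (p[i+2]'(by omega)) (p[i+1]'(by omega))) →
        Ancestor G (p[i+1]'(by omega)) S ∨ Ancestor G (p[i+1]'(by omega)) y := by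
      intro i hI hp
      obtain ⟨d, hdZ, hda⟩ := (ht i hI).1 hp
      rcases hdZ.2.2.2 with h' | h'
      · exact Or.inl (ancestor_trans hda h')
      · exact Or.inr (ancestor_trans hda h')
    have hAn := path_vertices_anc hch hh hl (by omega) hcolanc
    by_cases hallpairs : ∀ i, ∀ hI : i + 2 < p.length,
        ArrowInto G (p[i]'(by omega)) (p[i+1]'(by omega)) ∧
          ArrowInto G (p[i+2]'(by omega)) (p[i+1]'(by omega))
    · -- p is an inducing path: contradiction with maximality
      obtain ⟨Z₀, hS0, hy0, hsep⟩ := hmag3 S y hSy' hSy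
      obtain ⟨pc, hpc⟩ := inducing_connects hch hnd hh hl hlen3 hSy' hallpairs
        (fun i hI => hAn (i+1) (by omega)) hS0 hy0
      exact hsep pc hpc
    · -- there is a non-collider; the one closest to y is in Z, contradiction
      push_neg at hallpairs
      obtain ⟨i0, hI0, hnp0⟩ := hallpairs
      have hnp0' : ¬(ArrowInto G (p[i0]'(by omega)) (p[i0+1]'(by omega)) ∧
          ArrowInto G (p[i0+2]'(by omega)) (p[i0+1]'(by omega))) := fun hc => hnp0 hc.1 hc.2
      set Pr : ℕ → Prop := fun i => ∃ hI : i + 2 < p.length,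
        ¬(ArrowInto G (p[i]'(by omega)) (p[i+1]'(by omega)) ∧
          ArrowInto G (p[i+2]'(by omega)) (p[i+1]'(by omega))) with hPrd
      obtain ⟨i, ⟨hI, hnp⟩, hmax⟩ : ∃ i, Pr i ∧ ∀ k, i < k → ¬ Pr k := by
        refine ⟨Nat.findGreatest Pr p.length,
          Nat.findGreatest_spec (P := Pr) (by omega) ⟨hI0, hnp0'⟩, ?_⟩
        intro k hk hP
        obtain ⟨hk2, hknp⟩ := hP
        exact Nat.findGreatest_is_greatest (P := Pr) hk (by omega) ⟨hk2, hknp⟩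
      have hwZ : (p[i+1]'(by omega)) ∉ Z := (ht i hI).2 hnp
      apply hwZ
      have hwx : (p[i+1]'(by omega)) ≠ x := by
        intro he
        apply hnp
        constructor
        · have hadj := chain'_getElem hch i (by omega)
          rw [he] at hadj ⊢
          exact harr_x _ hadj
        · have hadj := adj_symm (chain'_getElem hch (i+1) (by omega))
          rw [he] at hadj ⊢
          exact harr_x _ hadj
      have hwS : (p[i+1]'(by omega)) ≠ S := by
        intro he
        have he' : p[i+1]'(by omega) = p[0]'(by omega) := by rw [he, e0]
        have := hnd.getElem_inj_iff.1 he'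
        omega
      have hwy : (p[i+1]'(by omega)) ≠ y := by
        intro he
        have he' : p[i+1]'(by omega) = p[p.length-1]'(by omega) := by rw [he, eny]
        have := hnd.getElem_inj_iff.1 he'
        omega
      refine ⟨⟨hwy, ?_⟩, hwx, hwS, hAn (i+1) (by omega)⟩
      by_cases hadjy : G.adj (p[i+1]'(by omega)) y
      · exact Or.inl hadjy
      · refine Or.inr ⟨hadjy, p.drop (i+1), ⟨⟨hch.suffix (List.drop_suffix _ _),
          (List.drop_sublist _ _).nodup hnd, head?_drop_elem (by omega), ?_, ?_⟩, ?_⟩⟩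
        · rw [getLast?_drop (by omega)]
          exact hl
        · simp only [List.length_drop]
          omega
        · intro w hint
          obtain ⟨j, hj, hje⟩ := isIntermediateOn_iff.1 hint
          have hjlen : j + 2 < (p.drop (i+1)).length := hj
          simp only [List.length_drop] at hjlen
          have hj' : (i+1+j) + 2 < p.length := by omega
          have hpair : ArrowInto G (p[i+1+j]'(by omega)) (p[i+1+j+1]'(by omega)) ∧
              ArrowInto G (p[i+1+j+2]'(by omega)) (p[i+1+j+1]'(by omega)) := by
            by_contra hnp'
            exact hmax (i+1+j) (by omega) ⟨by omega, hnp'⟩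
          have ej : (p.drop (i+1))[j]'(by simp only [List.length_drop]; omega)
              = p[i+1+j]'(by omega) := List.getElem_drop
          have ej1 : (p.drop (i+1))[j+1]'(by simp only [List.length_drop]; omega)
              = p[i+1+j+1]'(by omega) := List.getElem_drop
          have ej2 : (p.drop (i+1))[j+2]'(by simp only [List.length_drop]; omega)
              = p[i+1+j+2]'(by omega) := List.getElem_drop
          refine isColliderOn_iff.2 ⟨j, hj, hje, ?_, ?_⟩
          · rw [← hje, ej, ej1]
            exact hpair.1
          · rw [← hje, ej2, ej1]
            exact hpair.2
  · -- m-connection of S and x given Z via the edge S–x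
    refine ⟨[S, x], ⟨?_, ?_, rfl, by simp, by simp⟩, hSZ, hxZ, ?_, ?_⟩
    · exact List.isChain_cons_cons.2 ⟨hSx, List.isChain_singleton x⟩
    · simp [hSx']
    · intro w hw
      exact absurd hw.1 no_intermediate_pair
    · rintro w ⟨u, v, l₁, l₂, he, -, -⟩
      exact absurd ⟨u, v, l₁, l₂, he⟩ no_intermediate_pair

end CausalGraph
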